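/- Assume in addition that R(τ) → 0 as |τ| → ∞. Let {T_k} be a sequence of positive reals with T_k → ∞ and let {n_k} be positive integers with T_k/n_k → 0. Then lim_{k→∞} (n_k/T_k) · Σ_{l=1}^{n_k−1} γ_l(T_k, n_k) · γ_{n_k−l}(T_k, n_k) = 0. -/

import Mathlib

open MeasureTheory Filter Finset Real

/-- `γ_l = (n/T) ∫_{t_0}^{t_1} ∫_{t_l}^{t_{l+1}} R(v-u) dv du`, where `t_i = i T / n`. -/
noncomputable def gam (R : ℝ → ℝ) (T : ℝ) (n : ℕ) (l : ℤ) : ℝ :=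
  ((n : ℝ) / T) *
    ∫ u in (0:ℝ)..(T / n), ∫ v in ((l : ℝ) * T / n)..(((l : ℝ) + 1) * T / n), R (v - u)

/-! With `δ = T / n`, `γ_l` is `δ⁻¹` times the integral of `R (v - u)` over the cell
`[0, δ] × [lδ, (l+1)δ]`. The cells `l < n` tile a strip, so `∑ |γ_l| ≤ ∫ |R|`. For
`1 ≤ l ≤ n - 1` one of `l`, `n - l` is at least `n / 2`, and the corresponding factor of
`γ_l γ_{n-l}` only sees `R` beyond `T / 2 - δ → ∞`, hence is at most `δ ε` once `|R| ≤ ε` there.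
So `(n / T) ∑ |γ_l γ_{n-l}| ≤ 2 ε ∫ |R|`. -/

section DoubleIntegral

variable {R : ℝ → ℝ}

theorem continuous_intervalIntegral_comp_sub (hR : Continuous R) (a b : ℝ) :
    Continuous fun u => ∫ v in a..b, R (v - u) :=
  intervalIntegral.continuous_parametric_intervalIntegral_of_continuous' (f := fun u v => R (v - u))
    (by fun_prop) a b

theorem abs_integral_integral_comp_sub_le {a b c d ε : ℝ} (hab : a ≤ b) (hcd : c ≤ d)
    (hR : ∀ τ ≥ c - b, |R τ| ≤ ε) :
    |∫ u in a..b, ∫ v in c..d, R (v - u)| ≤ (b - a) * (d - c) * ε := by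
  have hinner : ∀ u ∈ Set.uIoc a b, ‖∫ v in c..d, R (v - u)‖ ≤ ε * (d - c) := by
    intro u hu
    rw [Set.uIoc_of_le hab] at hu
    have := intervalIntegral.norm_integral_le_of_norm_le_const (a := c) (b := d) (C := ε)
      (f := fun v => R (v - u)) fun v hv => by
        rw [Set.uIoc_of_le hcd] at hv
        exact hR _ (by linarith [hu.2, hv.1])
    rwa [abs_of_nonneg (sub_nonneg.2 hcd)] at this
  have := intervalIntegral.norm_integral_le_of_norm_le_const hinner
  rw [abs_of_nonneg (sub_nonneg.2 hab)] at this
  rw [← Real.norm_eq_abs]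
  linarith

theorem abs_integral_integral_comp_sub_le_integral_integral_abs (hR : Continuous R)
    {a b c d : ℝ} (hab : a ≤ b) (hcd : c ≤ d) :
    |∫ u in a..b, ∫ v in c..d, R (v - u)| ≤ ∫ u in a..b, ∫ v in c..d, |R (v - u)| :=
  (intervalIntegral.abs_integral_le_integral_abs hab).trans <|
    intervalIntegral.integral_mono_on hab
      ((continuous_intervalIntegral_comp_sub hR c d).abs.intervalIntegrable a b)
      ((continuous_intervalIntegral_comp_sub hR.abs c d).intervalIntegrable a b)
      fun _ _ => intervalIntegral.abs_integral_le_integral_abs hcd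

theorem integral_abs_comp_sub_le (hRi : Integrable R) {c d : ℝ} (hcd : c ≤ d) (u : ℝ) :
    ∫ v in c..d, |R (v - u)| ≤ ∫ τ, |R τ| := by
  rw [intervalIntegral.integral_comp_sub_right (fun τ => |R τ|),
    intervalIntegral.integral_of_le (by linarith)]
  exact setIntegral_le_integral hRi.abs (Eventually.of_forall fun τ => abs_nonneg _)

theorem sum_range_abs_integral_integral_comp_sub_le (hR : Continuous R) (hRi : Integrable R)
    {δ : ℝ} (hδ : 0 ≤ δ) (n : ℕ) :
    ∑ l ∈ range n, |∫ u in (0:ℝ)..δ, ∫ v in (l * δ)..((l + 1) * δ), R (v - u)|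
      ≤ δ * ∫ τ, |R τ| := by
  have hmono : Monotone fun l : ℕ => (l : ℝ) * δ :=
    fun i j hij => mul_le_mul_of_nonneg_right (by exact_mod_cast hij) hδ
  calc ∑ l ∈ range n, |∫ u in (0:ℝ)..δ, ∫ v in (l * δ)..((l + 1) * δ), R (v - u)|
      ≤ ∑ l ∈ range n, ∫ u in (0:ℝ)..δ, ∫ v in (l * δ)..((l + 1) * δ), |R (v - u)| :=
        sum_le_sum fun l _ => abs_integral_integral_comp_sub_le_integral_integral_abs hR hδ
          (by exact_mod_cast hmono l.le_succ)
    _ = ∫ u in (0:ℝ)..δ, ∫ v in (0:ℝ)..(n * δ), |R (v - u)| := by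
        rw [← intervalIntegral.integral_finsetSum fun l _ =>
          (continuous_intervalIntegral_comp_sub hR.abs _ _).intervalIntegrable _ _]
        refine intervalIntegral.integral_congr fun u _ => ?_
        have := intervalIntegral.sum_integral_adjacent_intervals (μ := volume)
          (f := fun v => |R (v - u)|) (a := fun l : ℕ => (l : ℝ) * δ) (n := n)
          fun _ _ => (hR.abs.comp (continuous_sub_right u)).intervalIntegrable _ _
        simpa using this
    _ ≤ ∫ _ in (0:ℝ)..δ, ∫ τ, |R τ| :=
        intervalIntegral.integral_mono_on hδ
          ((continuous_intervalIntegral_comp_sub hR.abs _ _).intervalIntegrable _ _)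
          intervalIntegrable_const
          fun u _ => integral_abs_comp_sub_le hRi (by simpa using hmono (Nat.zero_le n)) u
    _ = δ * ∫ τ, |R τ| := by simp

end DoubleIntegral

theorem abs_mul_le_mul_add_of_abs_le_or {a b c : ℝ} (hc : 0 ≤ c) (h : |a| ≤ c ∨ |b| ≤ c) :
    |a * b| ≤ c * (|a| + |b|) := by
  rw [abs_mul]
  rcases h with h | h <;> nlinarith [abs_nonneg a, abs_nonneg b]

theorem sum_Icc_one_sub_reflect {M : Type*} [AddCommMonoid M] (f : ℤ → M) (n : ℕ) :
    ∑ l ∈ Icc 1 (n - 1), f ((n : ℤ) - l) = ∑ l ∈ Icc 1 (n - 1), f l := by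
  refine sum_nbij' (fun l => n - l) (fun l => n - l) ?_ ?_ ?_ ?_ ?_ <;>
    simp only [mem_Icc] <;> intro l hl
  any_goals omega
  rw [Nat.cast_sub (by omega)]

section Gam

variable {R : ℝ → ℝ} {T ε : ℝ} {n : ℕ}

theorem gam_eq (l : ℤ) :
    gam R T n l = (T / n)⁻¹ *
      ∫ u in (0:ℝ)..(T / n), ∫ v in (l * (T / n))..((l + 1) * (T / n)), R (v - u) := by
  simp only [gam, inv_div, mul_div_assoc]

theorem abs_gam_le_of_tail (hT : 0 ≤ T) {l : ℤ} (hR : ∀ τ ≥ (l - 1) * (T / n), |R τ| ≤ ε) :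
    |gam R T n l| ≤ T / n * ε := by
  have hδ : 0 ≤ T / n := by positivity
  have hbound := abs_integral_integral_comp_sub_le (a := 0) (b := T / n)
    (c := l * (T / n)) (d := (l + 1) * (T / n)) hδ (by nlinarith)
    fun τ hτ => hR τ (by linarith)
  rw [gam_eq, abs_mul, abs_inv, abs_of_nonneg hδ]
  calc (T / n)⁻¹ * |∫ u in (0:ℝ)..(T / n), ∫ v in (l * (T / n))..((l + 1) * (T / n)), R (v - u)|
      ≤ (T / n)⁻¹ * ((T / n - 0) * ((l + 1) * (T / n) - l * (T / n)) * ε) := by gcongr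
    _ = (T / n)⁻¹ * (T / n) * (T / n) * ε := by ring
    _ = T / n * ε := by rw [inv_mul_mul_self]

theorem abs_gam_le_of_le_two_mul (hT : 0 < T) (hn : 0 < n) {l : ℤ} (hl : (n : ℤ) ≤ 2 * l)
    (hR : ∀ τ ≥ T / 2 - T / n, |R τ| ≤ ε) : |gam R T n l| ≤ T / n * ε := by
  refine abs_gam_le_of_tail hT.le fun τ hτ => hR τ (le_trans ?_ hτ)
  have hl' : (n : ℝ) ≤ 2 * l := by exact_mod_cast hl
  have : T / 2 ≤ l * (T / n) := by
    rw [mul_div_assoc', le_div_iff₀ (by positivity)]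
    nlinarith
  linarith

theorem sum_range_abs_gam_le (hR : Continuous R) (hRi : Integrable R) (hT : 0 ≤ T) (n : ℕ) :
    ∑ l ∈ range n, |gam R T n l| ≤ ∫ τ, |R τ| := by
  have hδ : 0 ≤ T / n := by positivity
  simp only [gam_eq, abs_mul, abs_inv, abs_of_nonneg hδ, ← mul_sum, Int.cast_natCast]
  calc (T / n)⁻¹ * ∑ l ∈ range n,
        |∫ u in (0:ℝ)..(T / n), ∫ v in (l * (T / n))..((l + 1) * (T / n)), R (v - u)|
      ≤ (T / n)⁻¹ * (T / n * ∫ τ, |R τ|) := by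
        gcongr
        exact sum_range_abs_integral_integral_comp_sub_le hR hRi hδ n
    _ ≤ ∫ τ, |R τ| := by
        rw [← mul_assoc]
        exact mul_le_of_le_one_left (integral_nonneg fun _ => abs_nonneg _)
          (inv_mul_le_one_of_le₀ le_rfl hδ)

theorem sum_Icc_abs_gam_le (hR : Continuous R) (hRi : Integrable R) (hT : 0 ≤ T) (n : ℕ) :
    ∑ l ∈ Icc 1 (n - 1), |gam R T n l| ≤ ∫ τ, |R τ| := by
  refine le_trans ?_ (sum_range_abs_gam_le hR hRi hT n)
  exact sum_le_sum_of_subset_of_nonneg (fun l hl => by simp at hl ⊢; omega)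
    fun _ _ _ => abs_nonneg _

theorem abs_sum_gam_mul_gam_le (hR : Continuous R) (hRi : Integrable R) (hT : 0 < T)
    (hn : 0 < n) (hε : ∀ τ ≥ T / 2 - T / n, |R τ| ≤ ε) :
    n / T * |∑ l ∈ Icc 1 (n - 1), gam R T n l * gam R T n ((n : ℤ) - l)|
      ≤ 2 * ε * ∫ τ, |R τ| := by
  have hε0 : 0 ≤ ε := (abs_nonneg _).trans (hε _ le_rfl)
  have hterm : ∀ l ∈ Icc 1 (n - 1), |gam R T n l * gam R T n ((n : ℤ) - l)|
      ≤ T / n * ε * (|gam R T n l| + |gam R T n ((n : ℤ) - l)|) := by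
    intro l hl
    rw [mem_Icc] at hl
    refine abs_mul_le_mul_add_of_abs_le_or (by positivity) ?_
    rcases le_total (n : ℤ) (2 * l) with h | h
    · exact Or.inl (abs_gam_le_of_le_two_mul hT hn h hε)
    · exact Or.inr (abs_gam_le_of_le_two_mul hT hn (by omega) hε)
  have hsum := sum_Icc_abs_gam_le hR hRi hT.le n
  calc n / T * |∑ l ∈ Icc 1 (n - 1), gam R T n l * gam R T n ((n : ℤ) - l)|
      ≤ n / T * ∑ l ∈ Icc 1 (n - 1), T / n * ε * (|gam R T n l| + |gam R T n ((n : ℤ) - l)|) := by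
        gcongr
        exact (abs_sum_le_sum_abs _ _).trans (sum_le_sum hterm)
    _ = n / T * (T / n) * ε * (2 * ∑ l ∈ Icc 1 (n - 1), |gam R T n l|) := by
        rw [← mul_sum, sum_add_distrib,
          sum_Icc_one_sub_reflect (fun l => |gam R T n l|)]
        ring
    _ ≤ 2 * ε * ∫ τ, |R τ| := by
        rw [div_mul_div_cancel₀ (by positivity), div_self (by positivity)]
        nlinarith

end Gam

theorem stmt_15_general (R : ℝ → ℝ) (hCont : Continuous R) (hInt : Integrable R)
    (hvanish : Tendsto R (cocompact ℝ) (nhds 0))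
    (T : ℕ → ℝ) (hTpos : ∀ k, 0 < T k) (hTlim : Tendsto T atTop atTop)
    (n : ℕ → ℕ) (hnpos : ∀ k, 0 < n k)
    (hratio : Tendsto (fun k => T k / (n k : ℝ)) atTop (nhds 0)) :
    Tendsto (fun k => ((n k : ℝ) / T k) *
        ∑ l ∈ Finset.Icc 1 (n k - 1), gam R (T k) (n k) l * gam R (T k) (n k) ((n k : ℤ) - l))
      atTop (nhds 0) := by
  set C := ∫ τ, |R τ|
  have hC : 0 ≤ C := integral_nonneg fun _ => abs_nonneg _
  have hthreshold : Tendsto (fun k => T k / 2 - T k / n k) atTop atTop := by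
    simpa only [sub_eq_add_neg] using (hTlim.atTop_div_const two_pos).atTop_add hratio.neg
  rw [Metric.tendsto_nhds]
  intro ε hε
  have hε' : 0 < ε / (2 * C + 1) := by positivity
  obtain ⟨A, hA⟩ := Metric.tendsto_atTop.1 (hvanish.mono_left atTop_le_cocompact) _ hε'
  filter_upwards [hthreshold.eventually_ge_atTop A] with k hk
  have hbound := abs_sum_gam_mul_gam_le hCont hInt (hTpos k) (hnpos k) (ε := ε / (2 * C + 1))
    fun τ hτ => by simpa using (hA τ (hk.trans hτ)).le
  rw [Real.dist_eq, sub_zero, abs_mul, abs_of_nonneg (by have := hTpos k; positivity)]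
  calc _ ≤ 2 * (ε / (2 * C + 1)) * C := hbound
    _ < ε := by
      rw [mul_comm 2, mul_assoc, div_mul_eq_mul_div, div_lt_iff₀ (by positivity)]
      nlinarith

theorem stmt_15 (R : ℝ → ℝ) (hEven : ∀ τ, R (-τ) = R τ) (hCont : Continuous R)
    (hBdd : ∃ M, ∀ τ, |R τ| ≤ M) (hInt : Integrable R)
    (hvanish : Tendsto R (cocompact ℝ) (nhds 0))
    (T : ℕ → ℝ) (hTpos : ∀ k, 0 < T k) (hTlim : Tendsto T atTop atTop)
    (n : ℕ → ℕ) (hnpos : ∀ k, 0 < n k)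
    (hratio : Tendsto (fun k => T k / (n k : ℝ)) atTop (nhds 0)) :
    Tendsto (fun k => ((n k : ℝ) / T k) *
        ∑ l ∈ Finset.Icc 1 (n k - 1), gam R (T k) (n k) l * gam R (T k) (n k) ((n k : ℤ) - l))
      atTop (nhds 0) :=
  stmt_15_general R hCont hInt hvanish T hTpos hTlim n hnpos hratio
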